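/- Let k and ℓ be positive integers with gcd(ℓ, k²+1) = 1, and suppose k²+1 = p₁·p₂ where p₁ and p₂ are distinct prime numbers. Then the set of pairs (x, y) of positive integers with gcd(ℓ, y) = 1 satisfying arctan(1/x) + arctan(ℓ/y) = arctan(1/k) consists of exactly the four pairs (k + ℓ(k²+1), kℓ + 1), (k + ℓ, kℓ + k² + 1), (k + ℓp₂, kℓ + p₁), and (k + ℓp₁, kℓ + p₂). -/
import Mathlib

open Real

lemma arctan_eq_iff_nat (k ℓ x y : ℕ) (hk : 0 < k) (hl : 0 < ℓ) (hx : 0 < x) (hy : 0 < y) :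
    Real.arctan (1 / (x : ℝ)) + Real.arctan ((ℓ : ℝ) / (y : ℝ)) = Real.arctan (1 / (k : ℝ)) ↔
      x * y = k * y + ℓ * (k * x) + ℓ := by
  have hx' : (0:ℝ) < x := by exact_mod_cast hx
  have hy' : (0:ℝ) < y := by exact_mod_cast hy
  have hk' : (0:ℝ) < k := by exact_mod_cast hk
  have hl' : (0:ℝ) < ℓ := by exact_mod_cast hl
  constructor
  · intro h
    have hab : (1 / (x:ℝ)) * ((ℓ:ℝ) / y) < 1 := by
      by_contra hge
      push_neg at hge
      have hbx : (x:ℝ) ≤ (ℓ:ℝ) / y := by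
        rw [div_mul_eq_mul_div, one_mul, le_div_iff₀ hx'] at hge
        linarith
      have h1 : Real.arctan ((x:ℝ)) ≤ Real.arctan ((ℓ:ℝ)/y) :=
        Real.arctan_strictMono.monotone hbx
      have h2 : Real.arctan (1/(x:ℝ)) = π/2 - Real.arctan x := by
        rw [one_div]; exact Real.arctan_inv_of_pos hx'
      have h3 : Real.arctan (1/(k:ℝ)) < π/2 := Real.arctan_lt_pi_div_two _
      linarith
    rw [Real.arctan_add hab] at h
    have h' := Real.arctan_injective h
    rw [div_eq_div_iff (by nlinarith) (by positivity)] at h'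
    have : (x:ℝ) * y = k * y + ℓ * (k * x) + ℓ := by
      field_simp at h'
      nlinarith [h']
    exact_mod_cast this
  · intro h
    have h' : (x:ℝ) * y = k * y + ℓ * (k * x) + ℓ := by exact_mod_cast h
    have hab : (1 / (x:ℝ)) * ((ℓ:ℝ) / y) < 1 := by
      rw [div_mul_div_comm, one_mul, div_lt_one (by positivity)]
      nlinarith [h', mul_pos hk' hy', mul_pos hl' (mul_pos hk' hx')]
    rw [Real.arctan_add hab]
    congr 1
    rw [div_eq_div_iff (by nlinarith) (by positivity)]
    field_simp
    nlinarith [h']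

lemma mul_eq_prime_mul_prime {p₁ p₂ e m : ℕ} (hp₁ : Nat.Prime p₁) (hp₂ : Nat.Prime p₂)
    (h : e * m = p₁ * p₂) :
    (e = 1 ∧ m = p₁ * p₂) ∨ (e = p₁ ∧ m = p₂) ∨ (e = p₂ ∧ m = p₁) ∨ (e = p₁ * p₂ ∧ m = 1) := by
  by_cases hd : p₁ ∣ e
  · obtain ⟨e', rfl⟩ := hd
    have h2 : e' * m = p₂ := by
      have h3 : p₁ * (e' * m) = p₁ * p₂ := by rw [← h]; ring
      exact Nat.eq_of_mul_eq_mul_left hp₁.pos h3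
    rcases Nat.Prime.eq_one_or_self_of_dvd hp₂ e' ⟨m, h2.symm⟩ with h1 | h1
    · right; left
      rw [h1] at h2 ⊢
      exact ⟨by ring, by simpa using h2⟩
    · right; right; right
      rw [h1] at h2 ⊢
      have hm : m = 1 := by nlinarith [hp₂.two_le]
      exact ⟨rfl, hm⟩
  · have hcop : Nat.Coprime e p₁ := Nat.Coprime.symm ((Nat.Prime.coprime_iff_not_dvd hp₁).mpr hd)
    have he2 : e ∣ p₂ := Nat.Coprime.dvd_of_dvd_mul_left hcop ⟨m, h.symm⟩
    rcases Nat.Prime.eq_one_or_self_of_dvd hp₂ e he2 with h1 | h1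
    · left
      rw [h1] at h ⊢
      exact ⟨rfl, by simpa using h⟩
    · right; right; left
      rw [h1] at h ⊢
      have h3 : p₂ * m = p₂ * p₁ := by rw [h]; ring
      exact ⟨rfl, Nat.eq_of_mul_eq_mul_left hp₂.pos h3⟩

theorem stmt_4 (k ℓ p₁ p₂ : ℕ) (hk : 0 < k) (hl : 0 < ℓ)
    (hgcd : Nat.gcd ℓ (k ^ 2 + 1) = 1)
    (hp₁ : Nat.Prime p₁) (hp₂ : Nat.Prime p₂) (hne : p₁ ≠ p₂)
    (hfact : k ^ 2 + 1 = p₁ * p₂) :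
    {p : ℕ × ℕ | 0 < p.1 ∧ 0 < p.2 ∧ Nat.gcd ℓ p.2 = 1 ∧
        Real.arctan (1 / (p.1 : ℝ)) + Real.arctan ((ℓ : ℝ) / (p.2 : ℝ)) =
          Real.arctan (1 / (k : ℝ))} =
      {(k + ℓ * (k ^ 2 + 1), k * ℓ + 1), (k + ℓ, k * ℓ + k ^ 2 + 1),
       (k + ℓ * p₂, k * ℓ + p₁), (k + ℓ * p₁, k * ℓ + p₂)} := by
  have hfz : ((k:ℤ))^2 + 1 = (p₁:ℤ) * p₂ := by exact_mod_cast hfact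
  have hcp : Nat.Coprime ℓ (p₁ * p₂) := by rw [← hfact]; exact hgcd
  ext ⟨x, y⟩
  simp only [Set.mem_setOf_eq, Set.mem_insert_iff, Set.mem_singleton_iff, Prod.mk.injEq]
  constructor
  · rintro ⟨hx, hy, hcop, heq⟩
    rw [arctan_eq_iff_nat k ℓ x y hk hl hx hy] at heq
    -- x > k
    have hxk : k < x := by
      by_contra hc
      push_neg at hc
      have h2 : x * y ≤ k * y := Nat.mul_le_mul_right y hc
      rw [heq] at h2
      omega
    obtain ⟨d, rfl⟩ : ∃ d, x = k + d := ⟨x - k, by omega⟩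
    have hd : 0 < d := by omega
    have key : d * y = ℓ * k * d + ℓ * (k ^ 2 + 1) := by zify at heq ⊢; linear_combination heq
    have hym : ℓ * k < y := by nlinarith
    obtain ⟨m, rfl⟩ : ∃ m, y = ℓ * k + m := ⟨y - ℓ * k, by omega⟩
    have hm : 0 < m := by omega
    have key2 : d * m = ℓ * (k ^ 2 + 1) := by zify at key ⊢; linear_combination key
    have hcopm : Nat.Coprime ℓ m := by
      have : Nat.gcd ℓ (ℓ * k + m) = Nat.gcd ℓ m := by
        rw [show ℓ * k + m = m + ℓ * k by ring, Nat.gcd_add_mul_left_right]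
      rw [this] at hcop; exact hcop
    have hld : ℓ ∣ d := Nat.Coprime.dvd_of_dvd_mul_right hcopm ⟨k ^ 2 + 1, key2⟩
    obtain ⟨e, rfl⟩ := hld
    have he : e * m = p₁ * p₂ := by
      rw [← hfact]
      have : ℓ * (e * m) = ℓ * (k ^ 2 + 1) := by rw [← key2]; ring
      exact Nat.eq_of_mul_eq_mul_left hl this
    rcases mul_eq_prime_mul_prime hp₁ hp₂ he with ⟨rfl, rfl⟩ | ⟨rfl, rfl⟩ | ⟨rfl, rfl⟩ | ⟨rfl, rfl⟩
    · right; left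
      exact ⟨by ring, by zify; linear_combination -hfz⟩
    · right; right; right; exact ⟨by ring, by ring⟩
    · right; right; left; exact ⟨by ring, by ring⟩
    · left
      exact ⟨by zify; linear_combination -(ℓ:ℤ) * hfz, by ring⟩
  · have harct := arctan_eq_iff_nat k ℓ
    rintro (⟨rfl, rfl⟩ | ⟨rfl, rfl⟩ | ⟨rfl, rfl⟩ | ⟨rfl, rfl⟩)
    · refine ⟨by positivity, by positivity, ?_, (harct _ _ hk hl (by positivity) (by positivity)).mpr ?_⟩
      · rw [show k * ℓ + 1 = 1 + ℓ * k by ring, Nat.gcd_add_mul_left_right, Nat.gcd_one_right]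
      · ring
    · refine ⟨by positivity, by positivity, ?_, (harct _ _ hk hl (by positivity) (by positivity)).mpr ?_⟩
      · rw [show k * ℓ + k ^ 2 + 1 = (k ^ 2 + 1) + ℓ * k by ring, Nat.gcd_add_mul_left_right]
        exact hgcd
      · ring
    · refine ⟨by positivity, by positivity, ?_, (harct _ _ hk hl (by positivity) (by positivity)).mpr ?_⟩
      · rw [show k * ℓ + p₁ = p₁ + ℓ * k by ring, Nat.gcd_add_mul_left_right]
        exact Nat.Coprime.coprime_dvd_right ⟨p₂, rfl⟩ hcp
      · zify; linear_combination -(ℓ:ℤ) * hfz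
    · refine ⟨by positivity, by positivity, ?_, (harct _ _ hk hl (by positivity) (by positivity)).mpr ?_⟩
      · rw [show k * ℓ + p₂ = p₂ + ℓ * k by ring, Nat.gcd_add_mul_left_right]
        exact Nat.Coprime.coprime_dvd_right ⟨p₁, mul_comm p₁ p₂⟩ hcp
      · zify; linear_combination -(ℓ:ℤ) * hfz
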